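/- arXiv:2009.14301 — 3 statements merged into one kernel-verified Lean document; each statement's English description precedes it below -/
import Mathlib

section
/- Let α, β > -1 and n ∈ ℕ. For every polynomial f, ∫_{-1}^1 f(x) P_n^{(α,β)}(x) (1-x)^α (1+x)^β dx = (1/(2n)) ∫_{-1}^1 f'(x) P_{n-1}^{(α+1,β+1)}(x) (1-x)^{α+1} (1+x)^{β+1} dx, where n ≥ 1. -/
open MeasureTheory Finset

/-- Generalized binomial coefficient `C(a, m) = a(a-1)⋯(a-m+1)/m!`. -/
noncomputable def gbinom (a : ℝ) (m : ℕ) : ℝ :=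
  (∏ i ∈ Finset.range m, (a - i)) / m.factorial

/-- Jacobi polynomial `P_n^{(α,β)}`. -/
noncomputable def jacobiP (n : ℕ) (α β : ℝ) (x : ℝ) : ℝ :=
  ∑ k ∈ Finset.range (n + 1),
    gbinom (n + α) (n - k) * gbinom (n + β) k * ((x - 1) / 2) ^ k * ((x + 1) / 2) ^ (n - k)

/-- The Beta function. -/
noncomputable def realBeta (x y : ℝ) : ℝ := Real.Gamma x * Real.Gamma y / Real.Gamma (x + y)

/-- Shifted Jacobi polynomial `Q_n^{(α,β)}(t) = P_n^{(α,β)}(2t-1)`. -/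
noncomputable def shiftedJacobiQ (n : ℕ) (α β : ℝ) (t : ℝ) : ℝ := jacobiP n α β (2 * t - 1)

/-- The polynomial `R_n^{(α,β)}`. -/
noncomputable def reprodR (n : ℕ) (α β : ℝ) (t : ℝ) : ℝ :=
  ((-1 : ℝ) ^ n * realBeta (α + 1) (β + 1) / realBeta (α + n + 1) (β + 1)) *
    shiftedJacobiQ n α (β + 1) t

/-!
On `(-1, 1)` one has the Rodrigues-type identity
`d/dx [(1-x)^(α+1) (1+x)^(β+1) P_{n-1}^{(α+1,β+1)}(x)] = -2n (1-x)^α (1+x)^β P_n^{(α,β)}(x)`.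
In the variables `u = (x-1)/2`, `v = (x+1)/2` both Jacobi polynomials are homogeneous of degrees
`n - 1` and `n`; differentiating the explicit sum term by term and using the recurrence
`(j+1) C(a, j+1) = (a-j) C(a, j)` reduces the identity to Euler's relation
`(u ∂_u + v ∂_v) F = n F`.
Integrating by parts against `f`, the boundary terms vanish because `α + 1, β + 1 > 0`, and the
integrals converge because `α, β > -1`.
-/

noncomputable def jacobiWeight (a b x : ℝ) : ℝ := (1 - x) ^ a * (1 + x) ^ b

section JacobiWeight

variable {a b x : ℝ}

lemma jacobiWeight_add_one_add_one (hx : x ∈ Set.Ioo (-1) 1) :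
    jacobiWeight (a + 1) (b + 1) x = (1 - x) * (1 + x) * jacobiWeight a b x := by
  rw [jacobiWeight, jacobiWeight, Real.rpow_add_one (sub_pos.2 hx.2).ne',
    Real.rpow_add_one (neg_lt_iff_pos_add'.1 hx.1).ne']
  ring

lemma hasDerivAt_jacobiWeight_add_one_add_one (hx : x ∈ Set.Ioo (-1) 1) :
    HasDerivAt (jacobiWeight (a + 1) (b + 1))
      (((b + 1) * (1 - x) - (a + 1) * (1 + x)) * jacobiWeight a b x) x := by
  have hl : 1 - x ≠ 0 := (sub_pos.2 hx.2).ne'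
  have hr : 1 + x ≠ 0 := (neg_lt_iff_pos_add'.1 hx.1).ne'
  have := (((hasDerivAt_id x).const_sub 1).rpow_const (p := a + 1) (Or.inl hl)).mul
    (((hasDerivAt_id x).const_add 1).rpow_const (p := b + 1) (Or.inl hr))
  refine this.congr_deriv ?_
  simp only [jacobiWeight, id, add_sub_cancel_right, Real.rpow_add_one hl, Real.rpow_add_one hr]
  ring

lemma continuous_jacobiWeight (ha : 0 ≤ a) (hb : 0 ≤ b) : Continuous (jacobiWeight a b) :=
  ((Real.continuous_rpow_const ha).comp (continuous_const.sub continuous_id)).mul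
    ((Real.continuous_rpow_const hb).comp (continuous_const.add continuous_id))

lemma jacobiWeight_one (ha : a ≠ 0) : jacobiWeight a b 1 = 0 := by
  simp [jacobiWeight, Real.zero_rpow ha]

lemma jacobiWeight_neg_one (hb : b ≠ 0) : jacobiWeight a b (-1) = 0 := by
  simp [jacobiWeight, Real.zero_rpow hb]

lemma intervalIntegrable_jacobiWeight_mul {c : ℝ → ℝ} (hc : ContinuousOn c (Set.Icc (-1) 1))
    (ha : -1 < a) (hb : -1 < b) :
    IntervalIntegrable (fun x => jacobiWeight a b x * c x) volume (-1) 1 := by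
  have hleft : IntervalIntegrable (fun x : ℝ => (1 + x) ^ b) volume (-1) 0 := by
    simpa [add_comm] using
      (intervalIntegral.intervalIntegrable_rpow' (a := 0) (b := 1) hb).comp_add_right 1
  have hright : IntervalIntegrable (fun x : ℝ => (1 - x) ^ a) volume 0 1 := by
    simpa using
      ((intervalIntegral.intervalIntegrable_rpow' (a := 0) (b := 1) ha).comp_sub_left 1).symm
  refine IntervalIntegrable.trans (b := 0) ?_ ?_
  · have hg : ContinuousOn (fun x => c x * (1 - x) ^ a) (Set.uIcc (-1) 0) := by
      rw [Set.uIcc_of_le (by norm_num)]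
      refine (hc.mono (Set.Icc_subset_Icc_right (by norm_num))).mul
        ((continuous_sub_left 1).continuousOn.rpow_const fun x hx => Or.inl ?_)
      linarith [hx.2]
    convert hleft.continuousOn_mul hg using 2 with x
    rw [jacobiWeight]
    ring
  · have hg : ContinuousOn (fun x => c x * (1 + x) ^ b) (Set.uIcc 0 1) := by
      rw [Set.uIcc_of_le (by norm_num)]
      refine (hc.mono (Set.Icc_subset_Icc_left (by norm_num))).mul
        ((continuous_const_add 1).continuousOn.rpow_const fun x hx => Or.inl ?_)
      linarith [hx.1]
    convert hright.continuousOn_mul hg using 2 with x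
    rw [jacobiWeight]
    ring

end JacobiWeight

lemma continuous_jacobiP (n : ℕ) (α β : ℝ) : Continuous (jacobiP n α β) := by
  unfold jacobiP
  fun_prop

lemma gbinom_succ_mul (a : ℝ) (m : ℕ) :
    ((m : ℝ) + 1) * gbinom a (m + 1) = (a - m) * gbinom a m := by
  rw [gbinom, gbinom, prod_range_succ, Nat.factorial_succ, Nat.cast_mul]
  have : (m.factorial : ℝ) ≠ 0 := Nat.cast_ne_zero.2 m.factorial_ne_zero
  field_simp
  push_cast
  ring

-- Euler's relation `(u ∂_u + v ∂_v) F = (m + 1) F` for `F = ∑ e k * u ^ k * v ^ (m + 1 - k)`.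
lemma sum_range_euler_homogeneous {R : Type*} [CommRing R] (e : ℕ → R) (m : ℕ) (u v : R) :
    ∑ k ∈ range (m + 1), (((m : R) + 1 - k) * e k * u ^ k * v ^ (m + 1 - k)
        + ((k : R) + 1) * e (k + 1) * u ^ (k + 1) * v ^ (m - k))
      = ((m : R) + 1) * ∑ k ∈ range (m + 2), e k * u ^ k * v ^ (m + 1 - k) := by
  have hlow : ∑ k ∈ range (m + 1), ((m : R) + 1 - k) * e k * u ^ k * v ^ (m + 1 - k)
      = ∑ k ∈ range (m + 2), ((m : R) + 1 - k) * e k * u ^ k * v ^ (m + 1 - k) := by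
    rw [sum_range_succ _ (m + 1)]
    push_cast
    ring
  have hhigh : ∑ k ∈ range (m + 1), ((k : R) + 1) * e (k + 1) * u ^ (k + 1) * v ^ (m - k)
      = ∑ k ∈ range (m + 2), (k : R) * e k * u ^ k * v ^ (m + 1 - k) := by
    rw [sum_range_succ' _ (m + 1)]
    simp
  rw [sum_add_distrib, hlow, hhigh, ← sum_add_distrib, mul_sum]
  exact sum_congr rfl fun k _ => by ring

lemma hasDerivAt_jacobiWeight_mul_monomial (a b : ℝ) (k l : ℕ) {x : ℝ}
    (hx : x ∈ Set.Ioo (-1) 1) :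
    HasDerivAt (fun y => jacobiWeight (a + 1) (b + 1) y * (((y - 1) / 2) ^ k * ((y + 1) / 2) ^ l))
      (-2 * jacobiWeight a b x * ((a + 1 + k) * ((x - 1) / 2) ^ k * ((x + 1) / 2) ^ (l + 1)
        + (b + 1 + l) * ((x - 1) / 2) ^ (k + 1) * ((x + 1) / 2) ^ l)) x := by
  have hpow (n : ℕ) (y : ℝ) : (n : ℝ) * y ^ (n - 1) * y = n * y ^ n := by
    rcases n with _ | n
    · simp
    · rw [Nat.add_sub_cancel, pow_succ]; ring
  have hu := (((hasDerivAt_id x).sub_const 1).div_const 2).pow k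
  have hv := (((hasDerivAt_id x).add_const 1).div_const 2).pow l
  refine ((hasDerivAt_jacobiWeight_add_one_add_one hx).mul (hu.mul hv)).congr_deriv ?_
  simp only [id, Pi.mul_apply, Pi.pow_apply, jacobiWeight_add_one_add_one hx]
  linear_combination (-2 * jacobiWeight a b x * ((x + 1) / 2) ^ (l + 1)) * hpow k ((x - 1) / 2)
    + (-2 * jacobiWeight a b x * ((x - 1) / 2) ^ (k + 1)) * hpow l ((x + 1) / 2)

lemma hasDerivAt_jacobiWeight_mul_homogeneous (a b : ℝ) {m : ℕ} {c e : ℕ → ℝ}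
    (hlow : ∀ k ≤ m, (a + 1 + k) * c k = ((m : ℝ) + 1 - k) * e k)
    (hhigh : ∀ k ≤ m, (b + 1 + ((m : ℝ) - k)) * c k = ((k : ℝ) + 1) * e (k + 1))
    {x : ℝ} (hx : x ∈ Set.Ioo (-1) 1) :
    HasDerivAt (fun y => jacobiWeight (a + 1) (b + 1) y *
        ∑ k ∈ range (m + 1), c k * ((y - 1) / 2) ^ k * ((y + 1) / 2) ^ (m - k))
      (-(2 * ((m : ℝ) + 1)) * (jacobiWeight a b x *
        ∑ k ∈ range (m + 2), e k * ((x - 1) / 2) ^ k * ((x + 1) / 2) ^ (m + 1 - k))) x := by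
  have hsum := HasDerivAt.fun_sum (u := range (m + 1)) fun k _ =>
    (hasDerivAt_jacobiWeight_mul_monomial a b k (m - k) hx).const_mul (c k)
  have hfun : (fun y => jacobiWeight (a + 1) (b + 1) y *
        ∑ k ∈ range (m + 1), c k * ((y - 1) / 2) ^ k * ((y + 1) / 2) ^ (m - k))
      = fun y => ∑ k ∈ range (m + 1),
          c k * (jacobiWeight (a + 1) (b + 1) y
            * (((y - 1) / 2) ^ k * ((y + 1) / 2) ^ (m - k))) := by
    funext y
    rw [mul_sum]
    exact sum_congr rfl fun k _ => by ring
  rw [hfun]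
  refine hsum.congr_deriv ?_
  calc _ = -2 * jacobiWeight a b x * ∑ k ∈ range (m + 1),
          (((m : ℝ) + 1 - k) * e k * ((x - 1) / 2) ^ k * ((x + 1) / 2) ^ (m + 1 - k)
            + ((k : ℝ) + 1) * e (k + 1) * ((x - 1) / 2) ^ (k + 1) * ((x + 1) / 2) ^ (m - k)) := by
        rw [mul_sum]
        refine sum_congr rfl fun k hk => ?_
        have hkm : k ≤ m := Nat.lt_succ_iff.mp (mem_range.mp hk)
        rw [← Nat.sub_add_comm hkm, Nat.cast_sub hkm]
        linear_combination
          (-2 * jacobiWeight a b x * ((x - 1) / 2) ^ k * ((x + 1) / 2) ^ (m + 1 - k)) * hlow k hkm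
          + (-2 * jacobiWeight a b x * ((x - 1) / 2) ^ (k + 1) * ((x + 1) / 2) ^ (m - k))
            * hhigh k hkm
    _ = _ := by
        rw [sum_range_euler_homogeneous]
        ring

theorem hasDerivAt_jacobiWeight_mul_jacobiP (α β : ℝ) (m : ℕ) {x : ℝ}
    (hx : x ∈ Set.Ioo (-1) 1) :
    HasDerivAt (fun y => jacobiWeight (α + 1) (β + 1) y * jacobiP m (α + 1) (β + 1) y)
      (-(2 * ((m : ℝ) + 1)) * (jacobiWeight α β x * jacobiP (m + 1) α β x)) x := by
  have hP (y : ℝ) : jacobiP m (α + 1) (β + 1) y = ∑ k ∈ range (m + 1),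
      gbinom (m + 1 + α) (m - k) * gbinom (m + 1 + β) k
        * ((y - 1) / 2) ^ k * ((y + 1) / 2) ^ (m - k) := by
    simp only [jacobiP, ← add_assoc, add_right_comm _ (1 : ℝ)]
  have hQ : jacobiP (m + 1) α β x = ∑ k ∈ range (m + 2),
      gbinom (m + 1 + α) (m + 1 - k) * gbinom (m + 1 + β) k
        * ((x - 1) / 2) ^ k * ((x + 1) / 2) ^ (m + 1 - k) := by
    simp only [jacobiP, Nat.cast_add, Nat.cast_one]
  simp only [hP, hQ]
  refine hasDerivAt_jacobiWeight_mul_homogeneous α β (fun k hk => ?_) (fun k _ => ?_) hx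
  · have h := gbinom_succ_mul (m + 1 + α) (m - k)
    rw [Nat.cast_sub hk, ← Nat.sub_add_comm hk] at h
    linear_combination (-gbinom (m + 1 + β) k) * h
  · rw [Nat.add_sub_add_right]
    linear_combination (-gbinom (m + 1 + α) (m - k)) * gbinom_succ_mul (m + 1 + β) k

theorem integral_mul_jacobiWeight_mul_jacobiP {α β : ℝ} (hα : -1 < α) (hβ : -1 < β) (m : ℕ)
    {f f' : ℝ → ℝ} (hf : ContinuousOn f (Set.Icc (-1) 1))
    (hff' : ∀ x ∈ Set.Ioo (-1) 1, HasDerivAt f (f' x) x)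
    (hf' : IntervalIntegrable f' volume (-1) 1) :
    2 * ((m : ℝ) + 1) * ∫ x in (-1 : ℝ)..1, f x * (jacobiWeight α β x * jacobiP (m + 1) α β x)
      = ∫ x in (-1 : ℝ)..1,
          f' x * (jacobiWeight (α + 1) (β + 1) x * jacobiP m (α + 1) (β + 1) x) := by
  have hIcc : Set.uIcc (-1 : ℝ) 1 = Set.Icc (-1) 1 := Set.uIcc_of_le (by norm_num)
  have hIoo : Set.Ioo (min (-1 : ℝ) 1) (max (-1) 1) = Set.Ioo (-1) 1 := by norm_num
  have hv : Continuous fun x => jacobiWeight (α + 1) (β + 1) x * jacobiP m (α + 1) (β + 1) x :=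
    (continuous_jacobiWeight (by linarith) (by linarith)).mul (continuous_jacobiP _ _ _)
  have hv' := (intervalIntegrable_jacobiWeight_mul (continuous_jacobiP (m + 1) α β).continuousOn
    hα hβ).const_mul (-(2 * ((m : ℝ) + 1)))
  have hibp := intervalIntegral.integral_mul_deriv_eq_deriv_mul_of_hasDerivAt (a := -1) (b := 1)
    (hIcc ▸ hf) hv.continuousOn (hIoo ▸ hff')
    (fun x hx => hasDerivAt_jacobiWeight_mul_jacobiP α β m (hIoo ▸ hx)) hf' hv'
  simp only [jacobiWeight_one (a := α + 1) (by linarith),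
    jacobiWeight_neg_one (b := β + 1) (by linarith), zero_mul, mul_zero, sub_zero, zero_sub,
    mul_left_comm (f _) (-(2 * ((m : ℝ) + 1))), intervalIntegral.integral_const_mul] at hibp
  linarith

/-- Integration-by-parts identity for Jacobi polynomials. -/
theorem jacobiP_inner_product_reduction (α β : ℝ) (hα : -1 < α) (hβ : -1 < β)
    (n : ℕ) (hn : 1 ≤ n) (f : Polynomial ℝ) :
    ∫ x in (-1 : ℝ)..1, f.eval x * jacobiP n α β x * (1 - x) ^ α * (1 + x) ^ β
      = (1 / (2 * n)) *
        ∫ x in (-1 : ℝ)..1, (Polynomial.derivative f).eval x * jacobiP (n - 1) (α + 1) (β + 1) x *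
          (1 - x) ^ (α + 1) * (1 + x) ^ (β + 1) := by
  obtain ⟨m, rfl⟩ : ∃ m, n = m + 1 := ⟨n - 1, by omega⟩
  have h := integral_mul_jacobiWeight_mul_jacobiP hα hβ m f.continuous.continuousOn
    (fun x _ => f.hasDerivAt x) ((Polynomial.continuous _).intervalIntegrable _ _)
  simp only [jacobiWeight, mul_assoc, mul_comm, mul_left_comm] at h ⊢
  rw [Nat.add_sub_cancel, Nat.cast_succ, ← h]
  field_simp
end

section
/- Let α > -1, β > 0, and n ∈ ℕ. Then ∫_{-1}^1 P_n^{(α,β+1)}(x) (1-x)^α (1+x)^β dx = 2^{α+β+1} (-1)^n B(α+n+1, β+1), where B is the Beta function. -/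
open MeasureTheory Finset

/-! Substituting `x = 2t - 1` and expanding `P_n^{(α,β+1)}` in its two-binomial form turns the
integral into `2^{α+β+1}` times a finite sum of Beta integrals `B(β + n - k + 1, α + k + 1)`.
Written through `Γ`, every term carries the common factor `Γ(α+n+1) Γ(β+n+2) / Γ(α+β+n+2)`,
and what is left is the partial-fraction identity
`∑ⱼ (-1)ʲ C(n,j) / (x + j) = n! / (x (x+1) ⋯ (x+n))` at `x = β + 1`. -/

open scoped Nat

theorem Real.Gamma_add_nat_eq_mul_prod {x : ℝ} (hx : 0 < x) (m : ℕ) :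
    Real.Gamma (x + m) = Real.Gamma x * ∏ i ∈ range m, (x + i) := by
  induction m with
  | zero => simp
  | succ m ih =>
    rw [prod_range_succ, ← mul_assoc, ← ih, Nat.cast_succ, ← add_assoc,
      Real.Gamma_add_one (by positivity), mul_comm]

theorem gbinom_eq_Gamma_div {x : ℝ} (hx : 0 < x) (m : ℕ) :
    gbinom (x + m - 1) m = Real.Gamma (x + m) / (Real.Gamma x * m !) := by
  have hprod : ∏ i ∈ range m, (x + m - 1 - i) = ∏ i ∈ range m, (x + i) := by
    rw [← prod_range_reflect]
    refine prod_congr rfl fun i hi => ?_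
    rw [Nat.sub_sub, Nat.cast_sub (by rw [mem_range] at hi; omega)]
    push_cast; ring
  rw [gbinom, hprod, Real.Gamma_add_nat_eq_mul_prod hx,
    mul_div_mul_left _ _ (Real.Gamma_pos_of_pos hx).ne']

theorem sum_choose_mul_neg_one_pow_div (n : ℕ) {x : ℝ} (hx : 0 < x) :
    ∑ j ∈ range (n + 1), (n.choose j : ℝ) * ((-1) ^ j / (x + j))
      = n ! / ∏ j ∈ range (n + 1), (x + j) := by
  induction n generalizing x with
  | zero => simp
  | succ n ih =>
    have hshift :
        ∑ i ∈ range (n + 1), (n.choose i : ℝ) * ((-1) ^ (i + 1) / (x + (i + 1 : ℕ)))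
          = -(n ! / ∏ j ∈ range (n + 1), (x + 1 + j)) := by
      rw [← ih (by positivity), ← sum_neg_distrib]
      refine sum_congr rfl fun i _ => ?_
      push_cast; ring
    have hfirst :
        ∏ j ∈ range (n + 2), (x + j) = (∏ j ∈ range (n + 1), (x + j)) * (x + (n + 1)) := by
      rw [prod_range_succ]; push_cast; ring
    have hlast : ∏ j ∈ range (n + 2), (x + j) = (∏ j ∈ range (n + 1), (x + 1 + j)) * x := by
      rw [prod_range_succ']
      push_cast
      simp only [add_zero]
      exact congrArg (· * x) (prod_congr rfl fun j _ => by ring)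
    have hP : (0 : ℝ) < ∏ j ∈ range (n + 1), (x + j) := prod_pos fun j _ => by positivity
    have hQ : (0 : ℝ) < ∏ j ∈ range (n + 1), (x + 1 + j) := prod_pos fun j _ => by positivity
    rw [sum_choose_succ_mul (fun i _ => (-1 : ℝ) ^ i / (x + i)), ih hx, hshift,
      ← sub_eq_add_neg, div_sub_div _ _ hP.ne' hQ.ne',
      div_eq_div_iff (by positivity) (by positivity),
      Nat.factorial_succ]
    push_cast
    linear_combination (n ! : ℝ) * (∏ j ∈ range (n + 1), (x + 1 + j)) * hfirst
      - (n ! : ℝ) * (∏ j ∈ range (n + 1), (x + j)) * hlast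

theorem ofReal_rpow_mul_one_sub_rpow {a b t : ℝ} (ht : t ∈ Set.uIcc (0 : ℝ) 1) :
    ((t ^ a * (1 - t) ^ b : ℝ) : ℂ) = (t : ℂ) ^ (a : ℂ) * (1 - (t : ℂ)) ^ (b : ℂ) := by
  rw [Set.uIcc_of_le zero_le_one] at ht
  rw [Complex.ofReal_mul, Complex.ofReal_cpow ht.1, Complex.ofReal_cpow (sub_nonneg.2 ht.2)]
  push_cast; ring

theorem intervalIntegrable_rpow_mul_one_sub_rpow {a b : ℝ} (ha : -1 < a) (hb : -1 < b) :
    IntervalIntegrable (fun t : ℝ => t ^ a * (1 - t) ^ b) volume 0 1 := by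
  have hc := Complex.betaIntegral_convergent (u := a + 1) (v := b + 1)
    (by simp; linarith) (by simp; linarith)
  simp only [add_sub_cancel_right] at hc
  rw [intervalIntegrable_iff]
  refine ((hc.congr fun t ht => (ofReal_rpow_mul_one_sub_rpow
    (Set.uIoc_subset_uIcc ht)).symm).def'.re).congr (Filter.Eventually.of_forall fun t => ?_)
  simp

theorem integral_rpow_mul_one_sub_rpow {a b : ℝ} (ha : -1 < a) (hb : -1 < b) :
    ∫ t in (0 : ℝ)..1, t ^ a * (1 - t) ^ b = realBeta (a + 1) (b + 1) := by
  rw [show realBeta (a + 1) (b + 1) = ProbabilityTheory.beta (a + 1) (b + 1) from rfl,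
    ProbabilityTheory.beta_eq_betaIntegralReal _ _ (by linarith) (by linarith),
    Complex.betaIntegral]
  push_cast
  simp only [add_sub_cancel_right]
  rw [← intervalIntegral.integral_congr fun t ht => ofReal_rpow_mul_one_sub_rpow ht,
    intervalIntegral.integral_ofReal, Complex.ofReal_re]

theorem jacobiP_two_mul_sub_one (n : ℕ) (α β t : ℝ) :
    jacobiP n α β (2 * t - 1) = ∑ k ∈ range (n + 1),
      gbinom (n + α) (n - k) * gbinom (n + β) k * (-1) ^ k * (t ^ (n - k) * (1 - t) ^ k) := by
  refine sum_congr rfl fun k _ => ?_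
  rw [show (2 * t - 1 - 1) / 2 = -1 * (1 - t) by ring, show (2 * t - 1 + 1) / 2 = t by ring,
    mul_pow]
  ring

theorem integral_jacobiP_mul_rpow_mul_rpow (n : ℕ) (α β : ℝ) {a b : ℝ} (ha : -1 < a)
    (hb : -1 < b) :
    ∫ x in (-1 : ℝ)..1, jacobiP n α β x * (1 - x) ^ a * (1 + x) ^ b
      = 2 ^ (a + b + 1) * ∑ k ∈ range (n + 1),
          gbinom (n + α) (n - k) * gbinom (n + β) k * (-1) ^ k *
            realBeta (b + (n - k : ℕ) + 1) (a + k + 1) := by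
  set c : ℕ → ℝ := fun k => gbinom (n + α) (n - k) * gbinom (n + β) k * (-1) ^ k
  have hsub : ∫ x in (-1 : ℝ)..1, jacobiP n α β x * (1 - x) ^ a * (1 + x) ^ b
      = 2 * ∫ t in (0 : ℝ)..1,
          jacobiP n α β (2 * t - 1) * (1 - (2 * t - 1)) ^ a * (1 + (2 * t - 1)) ^ b := by
    rw [intervalIntegral.integral_comp_mul_sub
      (fun x => jacobiP n α β x * (1 - x) ^ a * (1 + x) ^ b) two_ne_zero]
    norm_num
    ring
  have hexpand : Set.EqOn
      (fun t => jacobiP n α β (2 * t - 1) * (1 - (2 * t - 1)) ^ a * (1 + (2 * t - 1)) ^ b)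
      (fun t => 2 ^ (a + b) *
        ∑ k ∈ range (n + 1), c k * (t ^ (b + (n - k : ℕ)) * (1 - t) ^ (a + k)))
      (Set.Ioo 0 1) := by
    intro t ⟨ht0, ht1⟩
    have h1t : 0 < 1 - t := sub_pos.2 ht1
    simp only [jacobiP_two_mul_sub_one, sum_mul, mul_sum]
    refine sum_congr rfl fun k _ => ?_
    rw [show 1 - (2 * t - 1) = 2 * (1 - t) by ring, show 1 + (2 * t - 1) = 2 * t by ring,
      Real.mul_rpow zero_le_two h1t.le, Real.mul_rpow zero_le_two ht0.le,
      Real.rpow_add_natCast ht0.ne', Real.rpow_add_natCast h1t.ne', Real.rpow_add two_pos]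
    ring
  have hexp (k : ℕ) : -1 < b + (n - k : ℕ) ∧ -1 < a + k :=
    ⟨lt_add_of_lt_of_nonneg hb (Nat.cast_nonneg _),
      lt_add_of_lt_of_nonneg ha (Nat.cast_nonneg _)⟩
  have hterm : ∀ k ∈ range (n + 1),
      IntervalIntegrable (fun t => c k * (t ^ (b + (n - k : ℕ)) * (1 - t) ^ (a + k)))
        volume 0 1 :=
    fun k _ => (intervalIntegrable_rpow_mul_one_sub_rpow (hexp k).1 (hexp k).2).const_mul _
  have hbeta : ∀ k ∈ range (n + 1),
      ∫ t in (0 : ℝ)..1, c k * (t ^ (b + (n - k : ℕ)) * (1 - t) ^ (a + k))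
        = c k * realBeta (b + (n - k : ℕ) + 1) (a + k + 1) := fun k _ => by
    rw [intervalIntegral.integral_const_mul, integral_rpow_mul_one_sub_rpow (hexp k).1 (hexp k).2]
  rw [hsub, intervalIntegral.integral_congr_Ioo_of_le zero_le_one hexpand,
    intervalIntegral.integral_const_mul, intervalIntegral.integral_finsetSum hterm,
    sum_congr rfl hbeta, Real.rpow_add_one two_ne_zero]
  ring

theorem gbinom_mul_gbinom_mul_realBeta {α β : ℝ} (hα : -1 < α) (hβ : -1 < β) {n k : ℕ}
    (hk : k ≤ n) :
    gbinom (n + α) (n - k) * gbinom (n + (β + 1)) k *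
        realBeta (β + (n - k : ℕ) + 1) (α + k + 1)
      = Real.Gamma (α + n + 1) * Real.Gamma (β + n + 2) / Real.Gamma (α + β + n + 2)
          / ((n - k)! * k ! * (β + (n - k : ℕ) + 1)) := by
  obtain ⟨m, rfl⟩ := Nat.exists_eq_add_of_le' hk
  rw [Nat.add_sub_cancel]
  push_cast
  have hαk : 0 < α + k + 1 := by linarith [(k.cast_nonneg : (0 : ℝ) ≤ k)]
  have hβm : 0 < β + m + 1 := by linarith [(m.cast_nonneg : (0 : ℝ) ≤ m)]
  have h1 : gbinom (m + k + α) m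
      = Real.Gamma (α + (m + k) + 1) / (Real.Gamma (α + k + 1) * m !) := by
    convert gbinom_eq_Gamma_div hαk m using 2 <;> ring_nf
  have h2 : gbinom (m + k + (β + 1)) k
      = Real.Gamma (β + (m + k) + 2) / ((β + m + 1) * Real.Gamma (β + m + 1) * k !) := by
    rw [← Real.Gamma_add_one hβm.ne']
    convert gbinom_eq_Gamma_div (x := β + m + 1 + 1) (by linarith) k using 2 <;> ring_nf
  rw [h1, h2, realBeta, show β + m + 1 + (α + k + 1) = α + β + (m + k) + 2 by ring]
  have := (Real.Gamma_pos_of_pos hαk).ne'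
  have := (Real.Gamma_pos_of_pos hβm).ne'
  have := (Real.Gamma_pos_of_pos (show 0 < α + β + (m + k) + 2 by linarith)).ne'
  field_simp

theorem sum_gbinom_mul_gbinom_mul_realBeta {α β : ℝ} (hα : -1 < α) (hβ : -1 < β) (n : ℕ) :
    ∑ k ∈ range (n + 1), gbinom (n + α) (n - k) * gbinom (n + (β + 1)) k * (-1) ^ k *
        realBeta (β + (n - k : ℕ) + 1) (α + k + 1)
      = (-1) ^ n * realBeta (α + n + 1) (β + 1) := by
  set G := Real.Gamma (α + n + 1) * Real.Gamma (β + n + 2) / Real.Gamma (α + β + n + 2) with hG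
  have hterm : ∀ k ∈ range (n + 1),
      gbinom (n + α) (n - k) * gbinom (n + (β + 1)) k * (-1) ^ k *
        realBeta (β + (n - k : ℕ) + 1) (α + k + 1)
      = G / n ! * (-1) ^ n * (n.choose (n - k) * ((-1) ^ (n - k) / (β + 1 + (n - k : ℕ)))) := by
    intro k hk
    obtain ⟨m, rfl⟩ := Nat.exists_eq_add_of_le' (mem_range_succ_iff.mp hk)
    have hsign : (-1 : ℝ) ^ k = (-1) ^ (m + k) * (-1) ^ m := by
      rw [← pow_add, add_right_comm, ← two_mul, pow_add, pow_mul]; norm_num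
    rw [mul_right_comm, gbinom_mul_gbinom_mul_realBeta hα hβ (Nat.le_add_left k m), ← hG,
      Nat.add_sub_cancel, Nat.cast_add_choose, hsign]
    field_simp
    ring
  have hreflect :=
    sum_range_reflect (fun j => (n.choose j : ℝ) * ((-1) ^ j / (β + 1 + j))) (n + 1)
  simp only [add_tsub_cancel_right] at hreflect
  rw [sum_congr rfl hterm, ← mul_sum, hreflect, sum_choose_mul_neg_one_pow_div n (by linarith)]
  have hβ1 : 0 < β + 1 := by linarith
  have hn : (0 : ℝ) ≤ n := n.cast_nonneg
  have hprod :
      ∏ j ∈ range (n + 1), (β + 1 + j) = Real.Gamma (β + n + 2) / Real.Gamma (β + 1) := by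
    rw [eq_div_iff (Real.Gamma_pos_of_pos hβ1).ne', mul_comm,
      ← Real.Gamma_add_nat_eq_mul_prod hβ1]
    push_cast; ring_nf
  rw [hprod, hG, realBeta, show α + n + 1 + (β + 1) = α + β + n + 2 by ring]
  have := (Real.Gamma_pos_of_pos hβ1).ne'
  have := (Real.Gamma_pos_of_pos (show 0 < β + n + 2 by linarith)).ne'
  have := (Real.Gamma_pos_of_pos (show 0 < α + β + n + 2 by linarith)).ne'
  field_simp

/-- Integral of a Jacobi polynomial against an incomplete weight. -/
theorem jacobiP_incomplete_weight (α β : ℝ) (hα : -1 < α) (hβ : 0 < β) (n : ℕ) :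
    ∫ x in (-1 : ℝ)..1, jacobiP n α (β + 1) x * (1 - x) ^ α * (1 + x) ^ β
      = (2 : ℝ) ^ (α + β + 1) * (-1 : ℝ) ^ n * realBeta (α + n + 1) (β + 1) := by
  have hβ' : -1 < β := by linarith
  rw [integral_jacobiP_mul_rpow_mul_rpow n α (β + 1) hα hβ',
    sum_gbinom_mul_gbinom_mul_realBeta hα hβ' n, mul_assoc]
end

section
/- Let Ω ⊆ ℂ be open, W : Ω → (0,∞) continuous, n ≥ 1, and K ⊆ Ω compact. Then there exists a constant C > 0 such that for every n-analytic function f on Ω with ∫_Ω |f|² W dμ < ∞ and every z ∈ K, |f(z)| ≤ C (∫_Ω |f|² W dμ)^{1/2}. -/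
open MeasureTheory Finset

/-- The open unit disk in the complex plane. -/
def unitDisk : Set ℂ := {z : ℂ | ‖z‖ < 1}

/-- f is n-analytic on U: it is a polynomial of degree < n in conj z
with holomorphic coefficients. -/
def PolyAnalyticOn (n : ℕ) (f : ℂ → ℂ) (U : Set ℂ) : Prop :=
  ∃ g : ℕ → ℂ → ℂ, (∀ k < n, DifferentiableOn ℂ (g k) U) ∧
    ∀ z ∈ U, f z = ∑ k ∈ Finset.range n, g k z * (starRingEnd ℂ z) ^ k

/-!
Near `z₀` write `f z = ∑_{j<n} h_j z * conj (z - z₀) ^ j` with `h_j` holomorphic. Expanding each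
`h_j` in its power series and integrating over the disc of radius `ρ` about `z₀`, rotation
invariance kills every monomial `(z - z₀) ^ m * conj (z - z₀) ^ j` with `m ≠ j`, so
`∫_{B(z₀, ρ)} f` is a polynomial `∑_{k<n} c_k (ρ²)^(k+1)` with `c_0 = π f(z₀)`. Evaluating it at
`n` distinct radii below `r` and inverting the Vandermonde system writes `π f(z₀)` as a fixed
linear combination of disc integrals, whence `‖f z₀‖ ≤ C ∫_{B(z₀, r)} ‖f‖`. Cauchy–Schwarz and a
positive lower bound for `W` on a compact neighbourhood of `K` turn this into the weighted bound.
-/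

open Metric Complex Set ComplexConjugate
open scoped ENNReal NNReal Real

theorem setIntegral_closedBall_zero_comp_circle_mul {E : Type*} [NormedAddCommGroup E]
    [NormedSpace ℝ E] (g : ℂ → E) (a : Circle) (ρ : ℝ) :
    ∫ w in closedBall (0 : ℂ) ρ, g (a * w) = ∫ w in closedBall (0 : ℂ) ρ, g w := by
  have hpre : rotation a ⁻¹' closedBall 0 ρ = closedBall 0 ρ := by
    ext w
    simp only [Set.mem_preimage, mem_closedBall_zero_iff, rotation_apply, norm_mul, Circle.norm_coe,
      one_mul]
  simpa only [hpre, rotation_apply] using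
    (rotation a).measurePreserving.setIntegral_preimage_emb
      (rotation a).toHomeomorph.measurableEmbedding g (closedBall 0 ρ)

theorem setIntegral_closedBall_zero_pow_mul_conj_pow_of_ne {m j : ℕ} (hmj : m ≠ j) (ρ : ℝ) :
    ∫ w in closedBall (0 : ℂ) ρ, w ^ m * conj w ^ j = 0 := by
  set a := Circle.exp (π / ((m : ℝ) - j))
  have ha : (a : ℂ) ^ m * conj (a : ℂ) ^ j = -1 := by
    have hne : ((m : ℂ) - j) ≠ 0 := sub_ne_zero.2 (by exact_mod_cast hmj)
    rw [← Circle.coe_inv_eq_conj, Circle.coe_inv, Circle.coe_exp, ← Complex.exp_neg,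
      ← Complex.exp_nat_mul, ← Complex.exp_nat_mul, ← Complex.exp_add]
    convert Complex.exp_pi_mul_I using 2
    push_cast
    field_simp
    ring
  have hrot : ∀ w : ℂ, (a * w) ^ m * conj (a * w) ^ j = -(w ^ m * conj w ^ j) := fun w => by
    rw [map_mul, mul_pow, mul_pow, mul_mul_mul_comm, ha, neg_one_mul]
  have key := setIntegral_closedBall_zero_comp_circle_mul (fun w => w ^ m * conj w ^ j) a ρ
  simp only [hrot, integral_neg] at key
  linear_combination -key / 2

theorem setIntegral_closedBall_zero_norm_pow (k : ℕ) {ρ : ℝ} (hρ : 0 ≤ ρ) :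
    ∫ w in closedBall (0 : ℂ) ρ, ‖w‖ ^ k = 2 * π * ρ ^ (k + 2) / (k + 2) := by
  have hind : (closedBall (0 : ℂ) ρ).indicator (‖·‖ ^ k) =
      fun w => (Iic ρ).indicator (· ^ k) ‖w‖ := by
    ext w; by_cases h : ‖w‖ ≤ ρ <;> simp [indicator, h]
  rw [← integral_indicator measurableSet_closedBall, hind, integral_fun_norm_addHaar,
    Complex.finrank_real_complex]
  have hpow : ∀ y : ℝ,
      y ^ (2 - 1) • (Iic ρ).indicator (· ^ k) y = (Iic ρ).indicator (· ^ (k + 1)) y := fun y => by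
    by_cases h : y ≤ ρ <;> simp [h, pow_succ']
  simp_rw [hpow]
  rw [setIntegral_indicator measurableSet_Iic, Ioi_inter_Iic, ← intervalIntegral.integral_of_le hρ,
    integral_pow]
  simp [measureReal_def]
  ring

theorem setIntegral_closedBall_zero_pow_mul_conj_pow_self (j : ℕ) {ρ : ℝ} (hρ : 0 ≤ ρ) :
    ∫ w in closedBall (0 : ℂ) ρ, w ^ j * conj w ^ j = (π * ρ ^ (2 * j + 2) / (j + 1) : ℝ) := by
  have hsq : ∀ w : ℂ, w ^ j * conj w ^ j = ((‖w‖ ^ (2 * j) : ℝ) : ℂ) := fun w => by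
    rw [← mul_pow, Complex.mul_conj', pow_mul]; push_cast; rfl
  simp_rw [hsq, integral_complex_ofReal, setIntegral_closedBall_zero_norm_pow _ hρ]
  push_cast
  field_simp

theorem setIntegral_closedBall_eq_setIntegral_closedBall_zero {E : Type*} [NormedAddCommGroup E]
    [NormedSpace ℝ E] (F : ℂ → E) (z₀ : ℂ) (ρ : ℝ) :
    ∫ z in closedBall z₀ ρ, F z = ∫ w in closedBall 0 ρ, F (w + z₀) := by
  have hpre : (· + z₀) ⁻¹' closedBall z₀ ρ = closedBall 0 ρ := by
    ext w; simp
  rw [← hpre, (measurePreserving_add_right volume z₀).setIntegral_preimage_emb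
    (measurableEmbedding_addRight z₀)]

theorem HasFPowerSeriesOnBall.setIntegral_closedBall_mul_conj_pow {h : ℂ → ℂ}
    {p : FormalMultilinearSeries ℂ ℂ ℂ} {R : ℝ≥0∞} (hp : HasFPowerSeriesOnBall h p 0 R) {ρ : ℝ}
    (hρ : 0 ≤ ρ) (hρR : ENNReal.ofReal ρ < R) (j : ℕ) :
    ∫ w in closedBall (0 : ℂ) ρ, h w * conj w ^ j =
      (π * ρ ^ (2 * j + 2) / (j + 1) : ℝ) * p.coeff j := by
  set μ := volume.restrict (closedBall (0 : ℂ) ρ)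
  set F : ℕ → ℂ → ℂ := fun m w => p.coeff m * (w ^ m * conj w ^ j)
  have hF_lim : ∀ᵐ w ∂μ, HasSum (F · w) (h w * conj w ^ j) := by
    filter_upwards [ae_restrict_mem measurableSet_closedBall] with w hw
    have hwR : w ∈ eball (0 : ℂ) R := by
      rw [mem_eball, edist_zero_right]
      refine lt_of_le_of_lt ?_ hρR
      rw [← ofReal_norm]
      exact ENNReal.ofReal_le_ofReal (mem_closedBall_zero_iff.1 hw)
    simpa [F, mul_assoc, mul_comm, mul_left_comm] using (hp.hasSum hwR).mul_right (conj w ^ j)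
  have hF_bound : ∀ m, ∀ᵐ w ∂μ, ‖F m w‖ ≤ ‖p m‖ * ρ ^ m * ρ ^ j := by
    intro m
    filter_upwards [ae_restrict_mem measurableSet_closedBall] with w hw
    have hw : ‖w‖ ≤ ρ := mem_closedBall_zero_iff.1 hw
    simp only [F, norm_mul, norm_pow, RCLike.norm_conj, p.norm_apply_eq_norm_coef, mul_assoc]
    gcongr
  have hsummable : Summable fun m => ‖p m‖ * ρ ^ m * ρ ^ j := by
    refine Summable.mul_right _ ?_
    have := p.summable_norm_mul_pow (r := ρ.toNNReal) (hρR.trans_le hp.r_le)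
    simpa [Real.coe_toNNReal _ hρ] using this
  have hF_int : ∀ m, ∫ w, F m w ∂μ = if m = j then
      ((π * ρ ^ (2 * j + 2) / (j + 1) : ℝ) : ℂ) * p.coeff j else 0 := by
    intro m
    rw [integral_const_mul]
    split_ifs with hmj
    · rw [hmj, setIntegral_closedBall_zero_pow_mul_conj_pow_self j hρ, mul_comm]
    · rw [setIntegral_closedBall_zero_pow_mul_conj_pow_of_ne hmj, mul_zero]
  have := hasSum_integral_of_dominated_convergence _
    (fun m => (by fun_prop : Continuous (F m)).aestronglyMeasurable) hF_bound
    (.of_forall fun _ => hsummable) (integrableOn_const measure_closedBall_lt_top.ne) hF_lim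
  simp only [hF_int] at this
  exact this.unique (hasSum_ite_eq j _)

open Matrix in
theorem exists_weights_coeff_eq_sum_mul_sum_pow_succ {K : Type*} [Field K] {n : ℕ}
    {t : Fin n → K} (ht : Function.Injective t) (ht0 : ∀ i, t i ≠ 0) :
    ∃ w : Matrix (Fin n) (Fin n) K, ∀ (c : ℕ → K) (k : Fin n),
      c k = ∑ i, w k i * ∑ j ∈ range n, c j * t i ^ (j + 1) := by
  obtain ⟨M, hMij⟩ : ∃ M : Matrix (Fin n) (Fin n) K, ∀ i j, M i j = t i ^ (j + 1 : ℕ) :=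
    ⟨of fun i j => t i ^ (j + 1 : ℕ), fun _ _ => rfl⟩
  have hdet : IsUnit M.det := by
    have hM : M = diagonal t * vandermonde t := by
      ext i j; simp [hMij, vandermonde, pow_succ']
    rw [isUnit_iff_ne_zero, hM, det_mul, det_diagonal]
    exact mul_ne_zero (prod_ne_zero_iff.2 fun i _ => ht0 i) (det_vandermonde_ne_zero_iff.2 ht)
  refine ⟨M⁻¹, fun c k => ?_⟩
  have hinv : M⁻¹ *ᵥ (M *ᵥ fun j : Fin n => c j) = fun j : Fin n => c j := by
    rw [mulVec_mulVec, nonsing_inv_mul M hdet, one_mulVec]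
  rw [← congrFun hinv k]
  simp only [mulVec, dotProduct, hMij]
  refine sum_congr rfl fun i _ => ?_
  rw [← Fin.sum_univ_eq_sum_range (fun j => c j * t i ^ (j + 1))]
  simp only [mul_comm (t i ^ _)]

namespace PolyAnalyticOn

variable {n : ℕ} {f : ℂ → ℂ} {U : Set ℂ}

theorem continuousOn (hf : PolyAnalyticOn n f U) : ContinuousOn f U := by
  obtain ⟨g, hg, hfg⟩ := hf
  refine ContinuousOn.congr (continuousOn_finsetSum _ fun k hk => ?_) hfg
  exact (hg k (mem_range.1 hk)).continuousOn.mul (by fun_prop)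

theorem exists_sum_mul_conj_sub_pow (hf : PolyAnalyticOn n f U) (z₀ : ℂ) :
    ∃ h : ℕ → ℂ → ℂ, (∀ j < n, DifferentiableOn ℂ (h j) U) ∧
      ∀ z ∈ U, f z = ∑ j ∈ range n, h j z * conj (z - z₀) ^ j := by
  obtain ⟨g, hg, hfg⟩ := hf
  refine ⟨fun j z => ∑ k ∈ range n, (k.choose j * conj z₀ ^ (k - j)) * g k z,
    fun j _ => DifferentiableOn.fun_sum fun k hk => (hg k (mem_range.1 hk)).const_mul _,
    fun z hz => ?_⟩
  rw [hfg z hz]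
  simp only [sum_mul]
  rw [sum_comm]
  refine sum_congr rfl fun k hk => ?_
  have hconj : conj z = conj (z - z₀) + conj z₀ := by simp
  rw [hconj, add_pow, mul_sum]
  refine (sum_subset (range_subset_range.2 (mem_range.1 hk)) fun j _ hj => ?_).trans ?_
  · simp [Nat.choose_eq_zero_of_lt (by simpa using hj : k < j)]
  · refine sum_congr rfl fun j _ => ?_
    ring

theorem setIntegral_closedBall_eq_sum (hf : PolyAnalyticOn n f U) (hn : 0 < n) {z₀ : ℂ} {r : ℝ}
    (hr : 0 < r) (hrU : closedBall z₀ r ⊆ U) :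
    ∃ c : ℕ → ℂ, c 0 = π * f z₀ ∧ ∀ ρ, 0 ≤ ρ → ρ < r →
      ∫ z in closedBall z₀ ρ, f z = ∑ k ∈ range n, c k * ((ρ ^ 2 : ℝ) : ℂ) ^ (k + 1) := by
  obtain ⟨h, hh, hfh⟩ := hf.exists_sum_mul_conj_sub_pow z₀
  lift r to ℝ≥0 using hr.le
  set p := fun k => cauchyPowerSeries (h k) z₀ r
  have hps : ∀ k < n, HasFPowerSeriesOnBall (fun w => h k (w + z₀)) (p k) 0 r := fun k hk => by
    simpa using (((hh k hk).mono hrU).hasFPowerSeriesOnBall hr).comp_sub (-z₀)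
  refine ⟨fun k => (π / (k + 1) : ℝ) * (p k).coeff k, ?_, fun ρ hρ hρr => ?_⟩
  · have hf0 : f z₀ = h 0 z₀ := by
      rw [hfh z₀ (hrU (mem_closedBall_self hr.le)), ← Nat.succ_pred_eq_of_pos hn, sum_range_succ']
      simp
    have h0 : (p 0).coeff 0 = h 0 z₀ := by simpa using (hps 0 hn).coeff_zero 1
    simp [hf0, h0]
  have hρU : closedBall z₀ ρ ⊆ U := (closedBall_subset_closedBall hρr.le).trans hrU
  rw [setIntegral_congr_fun measurableSet_closedBall fun z hz => hfh z (hρU hz),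
    integral_finsetSum _ fun k hk => ?_]
  · refine sum_congr rfl fun k hk => ?_
    rw [setIntegral_closedBall_eq_setIntegral_closedBall_zero]
    simp only [add_sub_cancel_right]
    rw [(hps k (mem_range.1 hk)).setIntegral_closedBall_mul_conj_pow hρ ?_]
    · push_cast; ring
    · rw [← ENNReal.ofReal_coe_nnreal]
      exact ENNReal.ofReal_lt_ofReal_iff'.2 ⟨hρr, hr⟩
  · exact ContinuousOn.integrableOn_compact (isCompact_closedBall _ _)
      (((hh k (mem_range.1 hk)).continuousOn.mono hρU).mul (by fun_prop))

theorem exists_norm_le_mul_setIntegral_norm (hn : 0 < n) {r : ℝ} (hr : 0 < r) :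
    ∃ C ≥ 0, ∀ (f : ℂ → ℂ) (U : Set ℂ) (z₀ : ℂ), PolyAnalyticOn n f U → closedBall z₀ r ⊆ U →
      ‖f z₀‖ ≤ C * ∫ z in closedBall z₀ r, ‖f z‖ := by
  set ρ : Fin n → ℝ := fun i => r * (i + 1) / (n + 1)
  have hρ0 : ∀ i, 0 < ρ i := fun i => by positivity
  have hρr : ∀ i, ρ i < r := fun i => by
    rw [div_lt_iff₀ (by positivity)]
    have : (i : ℝ) < n := by exact_mod_cast i.isLt
    nlinarith
  have hρinj : Function.Injective fun i => ((ρ i ^ 2 : ℝ) : ℂ) := fun i j hij => by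
    have := (pow_left_inj₀ (hρ0 i).le (hρ0 j).le two_ne_zero).1 (Complex.ofReal_injective hij)
    rw [div_left_inj' (by positivity), mul_right_inj' hr.ne', add_left_inj] at this
    exact Fin.ext (by exact_mod_cast this)
  obtain ⟨w, hw⟩ := exists_weights_coeff_eq_sum_mul_sum_pow_succ hρinj
    fun i => by exact_mod_cast (pow_pos (hρ0 i) 2).ne'
  refine ⟨(∑ i, ‖w ⟨0, hn⟩ i‖) / π, by positivity, fun f U z₀ hf hrU => ?_⟩
  obtain ⟨c, hc0, hc⟩ := hf.setIntegral_closedBall_eq_sum hn hr hrU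
  have hball : ∀ i, ‖∫ z in closedBall z₀ (ρ i), f z‖ ≤ ∫ z in closedBall z₀ r, ‖f z‖ := fun i =>
    (norm_integral_le_integral_norm _).trans <| setIntegral_mono_set
      ((hf.continuousOn.mono hrU).norm.integrableOn_compact (isCompact_closedBall _ _))
      (.of_forall fun _ => norm_nonneg _) (closedBall_subset_closedBall (hρr i).le).eventuallyLE
  have hmean : (π : ℂ) * f z₀ = ∑ i, w ⟨0, hn⟩ i * ∫ z in closedBall z₀ (ρ i), f z := by
    rw [← hc0, hw c ⟨0, hn⟩]
    simp only [hc _ (hρ0 _).le (hρr _)]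
  rw [div_mul_eq_mul_div, le_div_iff₀ Real.pi_pos, mul_comm, sum_mul]
  calc π * ‖f z₀‖ = ‖(π : ℂ) * f z₀‖ := by simp [abs_of_pos Real.pi_pos]
    _ ≤ ∑ i, ‖w ⟨0, hn⟩ i‖ * ‖∫ z in closedBall z₀ (ρ i), f z‖ := by
      rw [hmean]; exact (norm_sum_le _ _).trans_eq (by simp only [norm_mul])
    _ ≤ ∑ i, ‖w ⟨0, hn⟩ i‖ * ∫ z in closedBall z₀ r, ‖f z‖ := by gcongr with i; exact hball i

end PolyAnalyticOn

theorem integral_le_sqrt_measureReal_univ_mul_sqrt_integral_sq {α : Type*} [MeasurableSpace α]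
    {μ : Measure α} [IsFiniteMeasure μ] {g : α → ℝ} (hg0 : 0 ≤ᵐ[μ] g) (hg : MemLp g 2 μ) :
    ∫ x, g x ∂μ ≤ √(μ.real univ) * √(∫ x, g x ^ 2 ∂μ) := by
  have h := integral_mul_le_Lp_mul_Lq_of_nonneg .two_two hg0 (.of_forall fun _ => zero_le_one)
    (by simpa using hg) (memLp_const (1 : ℝ))
  simpa [Real.sqrt_eq_rpow, mul_comm] using h

theorem setIntegral_le_setIntegral_mul_div {α : Type*} [MeasurableSpace α] {μ : Measure α}
    {s : Set α} (hs : MeasurableSet s) {g W : α → ℝ} {w₀ : ℝ} (hw₀ : 0 < w₀)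
    (hW : ∀ x ∈ s, w₀ ≤ W x) (hg0 : ∀ x ∈ s, 0 ≤ g x) (hg : IntegrableOn g s μ)
    (hgW : IntegrableOn (fun x => g x * W x) s μ) :
    ∫ x in s, g x ∂μ ≤ (∫ x in s, g x * W x ∂μ) / w₀ := by
  rw [le_div_iff₀ hw₀, ← integral_mul_const]
  exact setIntegral_mono_on (hg.mul_const w₀) hgW hs fun x hx =>
    mul_le_mul_of_nonneg_left (hW x hx) (hg0 x hx)

theorem setIntegral_le_sqrt_mul_sqrt_setIntegral_sq_mul {α : Type*} [MeasurableSpace α]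
    {μ : Measure α} {s t : Set α} (hs : MeasurableSet s) (hμs : μ s ≠ ∞) (ht : MeasurableSet t)
    (hst : s ⊆ t) {g W : α → ℝ} {w₀ : ℝ} (hw₀ : 0 < w₀) (hWs : ∀ x ∈ s, w₀ ≤ W x)
    (hWt : ∀ x ∈ t, 0 ≤ W x) (hg0 : ∀ x, 0 ≤ g x) (hg : AEStronglyMeasurable g (μ.restrict s))
    (hgW : IntegrableOn (fun x => g x ^ 2 * W x) t μ) :
    ∫ x in s, g x ∂μ ≤ √(μ.real s / w₀) * √(∫ x in t, g x ^ 2 * W x ∂μ) := by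
  have hsq : IntegrableOn (fun x => g x ^ 2) s μ := by
    refine ((hgW.mono_set hst).div_const w₀).mono' (hg.pow 2) ?_
    filter_upwards [ae_restrict_mem hs] with x hx
    rw [Real.norm_of_nonneg (sq_nonneg _), le_div_iff₀ hw₀]
    exact mul_le_mul_of_nonneg_left (hWs x hx) (sq_nonneg _)
  have hL2 : ∫ x in s, g x ^ 2 ∂μ ≤ (∫ x in t, g x ^ 2 * W x ∂μ) / w₀ := by
    refine (setIntegral_le_setIntegral_mul_div hs hw₀ hWs (fun x _ => sq_nonneg (g x)) hsq
      (hgW.mono_set hst)).trans (div_le_div_of_nonneg_right ?_ hw₀.le)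
    exact setIntegral_mono_set hgW (ae_restrict_of_forall_mem ht fun x hx =>
      mul_nonneg (sq_nonneg _) (hWt x hx)) hst.eventuallyLE
  have : IsFiniteMeasure (μ.restrict s) := isFiniteMeasure_restrict.2 hμs
  calc ∫ x in s, g x ∂μ ≤ √(μ.real s) * √(∫ x in s, g x ^ 2 ∂μ) := by
        simpa using integral_le_sqrt_measureReal_univ_mul_sqrt_integral_sq
          (.of_forall hg0) ((memLp_two_iff_integrable_sq hg).2 hsq)
    _ ≤ √(μ.real s) * √((∫ x in t, g x ^ 2 * W x ∂μ) / w₀) := by gcongr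
    _ = √(μ.real s / w₀) * √(∫ x in t, g x ^ 2 * W x ∂μ) := by
      rw [Real.sqrt_div' _ hw₀.le, Real.sqrt_div' _ hw₀.le]; ring

/-- Uniform boundedness of evaluation functionals on compact sets for weighted
Bergman spaces of polyanalytic functions. -/
theorem polyanalytic_evaluation_bounded (Ω : Set ℂ) (hΩ : IsOpen Ω)
    (W : ℂ → ℝ) (hWc : ContinuousOn W Ω) (hWpos : ∀ z ∈ Ω, 0 < W z)
    (n : ℕ) (hn : 1 ≤ n) (K : Set ℂ) (hK : IsCompact K) (hKΩ : K ⊆ Ω) :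
    ∃ C > 0, ∀ f : ℂ → ℂ, PolyAnalyticOn n f Ω →
      IntegrableOn (fun z => ‖f z‖ ^ 2 * W z) Ω volume →
      ∀ z ∈ K, ‖f z‖ ≤
        C * Real.sqrt (∫ z in Ω, ‖f z‖ ^ 2 * W z ∂volume) := by
  obtain ⟨r, hr, hrΩ⟩ := hK.exists_cthickening_subset_open hΩ hKΩ
  obtain ⟨w₀, hw₀, hW⟩ :=
    hK.cthickening.exists_forall_le' (hWc.mono hrΩ) fun z hz => hWpos z (hrΩ hz)
  obtain ⟨C, hC0, hC⟩ := PolyAnalyticOn.exists_norm_le_mul_setIntegral_norm hn hr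
  refine ⟨C * √(π * r ^ 2 / w₀) + 1, by positivity, fun f hf hfW z hz => ?_⟩
  have hB : closedBall z r ⊆ Ω := (closedBall_subset_cthickening hz r).trans hrΩ
  have hL1 := setIntegral_le_sqrt_mul_sqrt_setIntegral_sq_mul measurableSet_closedBall
    measure_closedBall_lt_top.ne hΩ.measurableSet hB hw₀
    (fun x hx => hW x (closedBall_subset_cthickening hz r hx)) (fun x hx => (hWpos x hx).le)
    (fun x => norm_nonneg (f x))
    ((hf.continuousOn.mono hB).norm.aestronglyMeasurable measurableSet_closedBall) hfW
  have hvol : volume.real (closedBall z r) = π * r ^ 2 := by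
    simp [measureReal_def, hr.le, mul_comm]
  rw [hvol] at hL1
  calc ‖f z‖ ≤ C * ∫ x in closedBall z r, ‖f x‖ := hC f Ω z hf hB
    _ ≤ C * √(π * r ^ 2 / w₀) * √(∫ z in Ω, ‖f z‖ ^ 2 * W z) := by rw [mul_assoc]; gcongr
    _ ≤ _ := by gcongr; linarith
end
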